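/- Let |₀ be a p-archimedean p-divisibility on a commutative ring A with ℚ ⊆ A satisfying p|₀a² ⟹ p|₀a for all a. Then the semi-norm ‖a‖ = p^{−ord a} (where ord a = sup{m ∈ ℤ : p^m |₀ a}) is power multiplicative: ‖a²‖ = ‖a‖² for all a ∈ A. -/

import Mathlib

/-!
Let `ord a` be the largest `m` with `p^m ∣ a`. Divisibility is multiplicative, so
`2 ord a ≤ ord (a²)`. Conversely, if `p^(2M+1) ∣ a²`, rescaling by the unit `p^(-M)` gives
`p ∣ b²` for `b = p^(-M) a`, hence `p ∣ b`, i.e. `p^(M+1) ∣ a`. Thus `ord (a²) = 2 ord a`.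
If `ord a = ∞` then also `ord (a²) = ∞`, and both norms vanish.
-/

def IsDivisibility {A : Type*} [CommRing A] (D : A → A → Prop) : Prop :=
  (∀ a, D a a) ∧ (∀ a b c : A, D a b → D b c → D a c) ∧
  (∀ a b c : A, D a b → D a c → D a (b - c)) ∧
  (∀ a b c : A, D a b → D (a * c) (b * c)) ∧ ¬ D 0 1

def IsPDivisibility (p : ℕ) {A : Type*} [CommRing A] (D : A → A → Prop) : Prop :=
  IsDivisibility D ∧
  (∀ a : A, ¬ D 0 a → ¬ D ((p : A) * a) a) ∧
  (∀ a b : A, D ((p : A) * ((a ^ p * b - b ^ p * a) ^ 2 - (b ^ (p + 1)) ^ 2))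
      ((a ^ p * b - b ^ p * a) * b ^ (p + 1)))

/-- The semi-norm `‖a‖ = p^{-ord a}` where `ord a = sup {m : ℤ | p^m | a}`,
expressed as the infimum of the values `p^{-m}` over all `m` with `p^m | a`. -/
noncomputable def divNorm (p : ℕ) {A : Type*} [CommRing A] [Algebra ℚ A]
    (D : A → A → Prop) (a : A) : ℝ :=
  sInf {x : ℝ | ∃ m : ℤ, D (algebraMap ℚ A ((p : ℚ) ^ m)) a ∧ x = (p : ℝ) ^ (-m)}

namespace IsDivisibility

variable {A : Type*} [CommRing A] {D : A → A → Prop} (hD : IsDivisibility D)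
include hD

theorem refl (a : A) : D a a := hD.1 a

theorem trans {a b c : A} (hab : D a b) (hbc : D b c) : D a c := hD.2.1 a b c hab hbc

theorem sub {a b c : A} (hb : D a b) (hc : D a c) : D a (b - c) := hD.2.2.1 a b c hb hc

theorem mul_right {a b : A} (c : A) (h : D a b) : D (a * c) (b * c) := hD.2.2.2.1 a b c h

theorem zero_right (a : A) : D a 0 := by
  simpa using hD.sub (hD.refl a) (hD.refl a)

theorem add {a b c : A} (hb : D a b) (hc : D a c) : D a (b + c) := by
  simpa using hD.sub hb (hD.sub (hD.zero_right a) hc)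

theorem natCast_mul (a : A) (n : ℕ) : D a (n * a) := by
  induction n with
  | zero => simpa using hD.zero_right a
  | succ n ih => simpa [add_mul] using hD.add ih (hD.refl a)

theorem mul {a b c d : A} (hab : D a b) (hcd : D c d) : D (a * c) (b * d) :=
  hD.trans (by simpa only [mul_comm] using hD.mul_right a hcd) (hD.mul_right d hab)

end IsDivisibility

section PAdicOrder

variable {A : Type*} [CommRing A] [Algebra ℚ A] {p : ℕ} {D : A → A → Prop}

/-- The paper's `ord a` is the supremum of this set. -/
def ordSet (p : ℕ) (D : A → A → Prop) (a : A) : Set ℤ :=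
  {m | D (algebraMap ℚ A ((p : ℚ) ^ m)) a}

theorem mem_ordSet {m : ℤ} {a : A} :
    m ∈ ordSet p D a ↔ D (algebraMap ℚ A ((p : ℚ) ^ m)) a := Iff.rfl

theorem algebraMap_zpow_add (hp : p ≠ 0) (m n : ℤ) :
    algebraMap ℚ A ((p : ℚ) ^ (m + n)) =
      algebraMap ℚ A ((p : ℚ) ^ m) * algebraMap ℚ A ((p : ℚ) ^ n) := by
  rw [zpow_add₀ (Nat.cast_ne_zero.2 hp), map_mul]

namespace IsDivisibility

variable (hD : IsDivisibility D) (hp : p ≠ 0)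
include hD hp

theorem add_mem_ordSet_mul {m n : ℤ} {a b : A} (ha : m ∈ ordSet p D a)
    (hb : n ∈ ordSet p D b) : m + n ∈ ordSet p D (a * b) := by
  rw [mem_ordSet, algebraMap_zpow_add hp]
  exact hD.mul ha hb

theorem add_mem_ordSet_zpow_mul_iff {m n : ℤ} {a : A} :
    m + n ∈ ordSet p D (algebraMap ℚ A ((p : ℚ) ^ n) * a) ↔ m ∈ ordSet p D a := by
  have hpn {k : ℤ} : k ∈ ordSet p D (algebraMap ℚ A ((p : ℚ) ^ k)) := hD.refl _
  refine ⟨fun h => ?_, fun h => by simpa only [add_comm m] using hD.add_mem_ordSet_mul hp hpn h⟩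
  have := hD.add_mem_ordSet_mul hp (hpn (k := -n)) h
  rwa [← mul_assoc, ← algebraMap_zpow_add hp, neg_add_cancel, zpow_zero, map_one, one_mul,
    neg_add_eq_sub, add_sub_cancel_right] at this

theorem mem_ordSet_of_le {m m' : ℤ} {a : A} (hle : m' ≤ m) (h : m ∈ ordSet p D a) :
    m' ∈ ordSet p D a := by
  -- `p^m = p^(m - m') * p^m'` is a natural-number multiple of `p^m'`
  obtain ⟨k, hk⟩ := Int.eq_ofNat_of_zero_le (sub_nonneg.2 hle)
  have hdvd : D (algebraMap ℚ A ((p : ℚ) ^ m')) (algebraMap ℚ A ((p : ℚ) ^ m)) := by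
    have := hD.natCast_mul (algebraMap ℚ A ((p : ℚ) ^ m')) (p ^ k)
    rwa [← map_natCast (algebraMap ℚ A), ← map_mul, Nat.cast_pow, ← zpow_natCast, ← hk,
      ← zpow_add₀ (Nat.cast_ne_zero.2 hp), sub_add_cancel] at this
  exact hD.trans hdvd h

theorem mem_ordSet_of_sq (hsq : ∀ a : A, D (p : A) (a ^ 2) → D (p : A) a) {j : ℤ} {a : A}
    (h : 2 * j + 1 ∈ ordSet p D (a ^ 2)) : j + 1 ∈ ordSet p D a := by
  set b := algebraMap ℚ A ((p : ℚ) ^ (-j)) * a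
  have hb2 : 1 ∈ ordSet p D (b ^ 2) := by
    have hb : b ^ 2 = algebraMap ℚ A ((p : ℚ) ^ (-(2 * j))) * a ^ 2 := by
      rw [mul_pow, ← map_pow, ← zpow_natCast, ← zpow_mul]
      ring_nf
    have := (hD.add_mem_ordSet_zpow_mul_iff hp (n := -(2 * j))).2 h
    rwa [← hb, show 2 * j + 1 + -(2 * j) = 1 by ring] at this
  have hb : 1 ∈ ordSet p D b := by
    rw [mem_ordSet, zpow_one, map_natCast] at hb2 ⊢
    exact hsq b hb2
  exact (hD.add_mem_ordSet_zpow_mul_iff hp (n := -j)).1 (by rwa [show j + 1 + -j = 1 by ring])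

theorem isGreatest_ordSet_sq (hsq : ∀ a : A, D (p : A) (a ^ 2) → D (p : A) a) {M : ℤ} {a : A}
    (hM : IsGreatest (ordSet p D a) M) : IsGreatest (ordSet p D (a ^ 2)) (2 * M) := by
  refine ⟨by simpa only [sq, two_mul] using hD.add_mem_ordSet_mul hp hM.1 hM.1, fun m hm => ?_⟩
  by_contra! hlt
  have := hM.2 (hD.mem_ordSet_of_sq hp hsq (hD.mem_ordSet_of_le hp hlt hm))
  omega

theorem ordSet_sq_eq_univ {a : A} (h : ordSet p D a = Set.univ) :
    ordSet p D (a ^ 2) = Set.univ :=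
  Set.eq_univ_of_forall fun m => by
    simpa only [sq, add_zero] using
      hD.add_mem_ordSet_mul hp (Set.eq_univ_iff_forall.1 h m) (Set.eq_univ_iff_forall.1 h 0)

end IsDivisibility

theorem divNorm_eq_of_isGreatest (hp : 1 < p) {a : A} {M : ℤ} (hM : IsGreatest (ordSet p D a) M) :
    divNorm p D a = (p : ℝ) ^ (-M) := by
  refine IsLeast.csInf_eq ⟨⟨M, hM.1, rfl⟩, ?_⟩
  rintro x ⟨m, hm, rfl⟩
  exact zpow_le_zpow_right₀ (by exact_mod_cast hp.le) (neg_le_neg (hM.2 hm))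

theorem divNorm_eq_zero_of_ordSet_eq_univ (hp : 1 < p) {a : A} (h : ordSet p D a = Set.univ) :
    divNorm p D a = 0 := by
  have hp' : (1 : ℝ) < p := by exact_mod_cast hp
  refine le_antisymm (le_of_forall_pos_le_add fun ε hε => ?_)
    (Real.sInf_nonneg fun x ⟨m, _, hx⟩ => hx ▸ by positivity)
  obtain ⟨n, hn⟩ := exists_pow_lt_of_lt_one hε (inv_lt_one_of_one_lt₀ hp')
  have hmem : (p : ℝ) ^ (-(n : ℤ)) ∈
      {x : ℝ | ∃ m : ℤ, D (algebraMap ℚ A ((p : ℚ) ^ m)) a ∧ x = (p : ℝ) ^ (-m)} :=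
    ⟨n, Set.eq_univ_iff_forall.1 h n, rfl⟩
  calc divNorm p D a ≤ (p : ℝ) ^ (-(n : ℤ)) :=
        csInf_le ⟨0, fun x ⟨m, _, hx⟩ => hx ▸ by positivity⟩ hmem
    _ ≤ 0 + ε := by rw [zpow_neg, zpow_natCast, ← inv_pow, zero_add]; exact hn.le

end PAdicOrder

theorem stmt_16 (p : ℕ) (hp : p.Prime) {A : Type*} [CommRing A] [Algebra ℚ A]
    (D : A → A → Prop) (hD : IsPDivisibility p D)
    (harch : ∀ a : A, ∃ m : ℤ, D (algebraMap ℚ A ((p : ℚ) ^ m)) a)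
    (hsq : ∀ a : A, D (p : A) (a ^ 2) → D (p : A) a) :
    ∀ a : A, divNorm p D (a ^ 2) = (divNorm p D a) ^ 2 := by
  intro a
  by_cases hbdd : BddAbove (ordSet p D a)
  · have hM : IsGreatest (ordSet p D a) (sSup (ordSet p D a)) :=
      ⟨Int.csSup_mem (harch a) hbdd, fun m hm => le_csSup hbdd hm⟩
    rw [divNorm_eq_of_isGreatest hp.one_lt (hD.1.isGreatest_ordSet_sq hp.ne_zero hsq hM),
      divNorm_eq_of_isGreatest hp.one_lt hM, ← zpow_natCast, ← zpow_mul]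
    congr 1
    push_cast
    ring
  · have huniv : ordSet p D a = Set.univ :=
      Set.eq_univ_of_forall fun m => by
        obtain ⟨n, hn, hmn⟩ := not_bddAbove_iff.1 hbdd m
        exact hD.1.mem_ordSet_of_le hp.ne_zero hmn.le hn
    rw [divNorm_eq_zero_of_ordSet_eq_univ hp.one_lt huniv,
      divNorm_eq_zero_of_ordSet_eq_univ hp.one_lt (hD.1.ordSet_sq_eq_univ hp.ne_zero huniv)]
    ring
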